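/- For n ≥ 2, B_n[2, f_{2n−1}] = B_{n+1}[f_{2n}+2, f_{2n+1}]; that is, the set of sub-words of words in B_n occupying positions 2 through f_{2n−1} equals the set of sub-words of words in B_{n+1} occupying positions f_{2n}+2 through f_{2n+1}. -/

import Mathlib

/-- The two-letter alphabet. -/
inductive Letter : Type
  | a : Letter
  | b : Letter
deriving DecidableEq

/-- A word is a finite sequence of letters. -/
abbrev Word := List Letter

/-- Concatenation set `UV = {uv : u ∈ U, v ∈ V}`. -/
def concatSet (U V : Set Word) : Set Word := {w | ∃ u ∈ U, ∃ v ∈ V, w = u ++ v}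

mutual
  /-- The sets `A_n` of inflated words (indexed so that `Aset 1 = {a}`). -/
  def Aset : ℕ → Set Word
    | 0 => ∅
    | 1 => {[Letter.a]}
    | n + 2 => concatSet (Bset (n + 1)) (concatSet (Aset (n + 1)) (Aset (n + 1)))
  /-- The sets `B_n` of inflated words (indexed so that `Bset 1 = {b}`). -/
  def Bset : ℕ → Set Word
    | 0 => ∅
    | 1 => {[Letter.b]}
    | n + 2 => concatSet (Aset (n + 1)) (Bset (n + 1)) ∪ concatSet (Bset (n + 1)) (Aset (n + 1))
end

/-- The sub-word `w[a,b] = w_a w_{a+1} … w_b` (1-indexed). -/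
def wordSlice (w : Word) (i j : ℕ) : Word := (w.drop (i - 1)).take (j - i + 1)

/-- `W[a,b] = {w[a,b] : w ∈ W}`. -/
def setSlice (W : Set Word) (i j : ℕ) : Set Word := {x | ∃ w ∈ W, x = wordSlice w i j}

/-- `x` is a sub-word (contiguous factor) of `w`. -/
def IsFactor (x w : Word) : Prop := ∃ u v : Word, w = u ++ x ++ v

/-- `F(S, m)`: the set of all sub-words of length `m` of words in `S`. -/
def FactorSet (S : Set Word) (m : ℕ) : Set Word :=
  {x | x.length = m ∧ ∃ w ∈ S, IsFactor x w}

/-- `F(A, m) = ⋃_{n ≥ 1} F(A_n, m)`. -/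
def FA (m : ℕ) : Set Word := ⋃ n ∈ {n : ℕ | 1 ≤ n}, FactorSet (Aset n) m

/-- `F(B, m) = ⋃_{n ≥ 1} F(B_n, m)`. -/
def FB (m : ℕ) : Set Word := ⋃ n ∈ {n : ℕ | 1 ≤ n}, FactorSet (Bset n) m

/-- The golden mean `τ = (1 + √5)/2`. -/
noncomputable def tau : ℝ := (1 + Real.sqrt 5) / 2

/-!
Both slices end at the last letter, so they are suffixes. Every word of `B_{n+1}` is `uv` with `u ∈ A_n, v ∈ B_n` or `vu` with `v ∈ B_n, u ∈ A_n`, and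
`|A_n| = f_{2n}`, `|B_n| = f_{2n-1}`. Cutting off the first `f_{2n} + 1` letters of `uv` leaves
`v` without its first letter. For `vu` it leaves `u` without its first `f_{2n-2} + 1` letters, and
an induction through `A_n = B_{n-1} A_{n-1} A_{n-1}` shows that this is again a word of `B_n`
without its first letter.
-/

lemma append_mem_concatSet {U V : Set Word} {u v : Word} (hu : u ∈ U) (hv : v ∈ V) :
    u ++ v ∈ concatSet U V :=
  ⟨u, hu, v, hv, rfl⟩

lemma mem_Bset_add_two {n : ℕ} {w : Word} :
    w ∈ Bset (n + 2) ↔ (∃ u ∈ Aset (n + 1), ∃ v ∈ Bset (n + 1), w = u ++ v) ∨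
      ∃ v ∈ Bset (n + 1), ∃ u ∈ Aset (n + 1), w = v ++ u := by
  rw [Bset]
  rfl

lemma length_Aset_Bset (n : ℕ) :
    (∀ w ∈ Aset (n + 1), w.length = Nat.fib (2 * n + 2)) ∧
      ∀ w ∈ Bset (n + 1), w.length = Nat.fib (2 * n + 1) := by
  induction n with
  | zero => simp [Aset, Bset]
  | succ n ih =>
    obtain ⟨hA, hB⟩ := ih
    rw [show 2 * (n + 1) + 2 = 2 * n + 4 by ring, show 2 * (n + 1) + 1 = 2 * n + 3 by ring]
    have fib_odd : Nat.fib (2 * n + 3) = Nat.fib (2 * n + 1) + Nat.fib (2 * n + 2) :=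
      Nat.fib_add_two
    have fib_even : Nat.fib (2 * n + 4) = Nat.fib (2 * n + 2) + Nat.fib (2 * n + 3) :=
      Nat.fib_add_two
    refine ⟨?_, fun w hw => ?_⟩
    · rintro _ ⟨u, hu, _, ⟨v₁, hv₁, v₂, hv₂, rfl⟩, rfl⟩
      simp only [List.length_append, hB u hu, hA v₁ hv₁, hA v₂ hv₂]
      omega
    · rcases mem_Bset_add_two.1 hw with ⟨u, hu, v, hv, rfl⟩ | ⟨v, hv, u, hu, rfl⟩
      all_goals
        simp only [List.length_append, hA u hu, hB v hv]
        omega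

lemma length_of_mem_Aset {n : ℕ} {w : Word} (hw : w ∈ Aset (n + 1)) :
    w.length = Nat.fib (2 * n + 2) :=
  (length_Aset_Bset n).1 w hw

lemma length_of_mem_Bset {n : ℕ} {w : Word} (hw : w ∈ Bset (n + 1)) :
    w.length = Nat.fib (2 * n + 1) :=
  (length_Aset_Bset n).2 w hw

lemma Aset_Bset_nonempty (n : ℕ) : (Aset (n + 1)).Nonempty ∧ (Bset (n + 1)).Nonempty := by
  induction n with
  | zero => exact ⟨⟨[Letter.a], rfl⟩, ⟨[Letter.b], rfl⟩⟩
  | succ n ih =>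
    obtain ⟨⟨u, hu⟩, ⟨v, hv⟩⟩ := ih
    refine ⟨⟨v ++ (u ++ u), ?_⟩, ⟨u ++ v, mem_Bset_add_two.2 (.inl ⟨u, hu, v, hv, rfl⟩)⟩⟩
    rw [Aset]
    exact append_mem_concatSet hv (append_mem_concatSet hu hu)

lemma exists_mem_Bset_drop_eq_of_mem_Aset {n : ℕ} {a : Word} (ha : a ∈ Aset (n + 1)) :
    ∃ b ∈ Bset (n + 1), a.drop (Nat.fib (2 * n) + 1) = b.drop 1 := by
  induction n generalizing a with
  | zero =>
    obtain rfl : a = [Letter.a] := ha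
    exact ⟨[Letter.b], rfl, rfl⟩
  | succ n ih =>
    obtain ⟨u, hu, _, ⟨a₁, ha₁, a₂, ha₂, rfl⟩, rfl⟩ := ha
    obtain ⟨b, hb, hdrop⟩ := ih ha₁
    have fib_even : Nat.fib (2 * n + 2) = Nat.fib (2 * n) + Nat.fib (2 * n + 1) :=
      Nat.fib_add_two
    have fib_odd_pos : 0 < Nat.fib (2 * n + 1) := Nat.fib_pos.2 (by omega)
    have hu_len := length_of_mem_Bset hu
    have ha₁_len := length_of_mem_Aset ha₁
    have hb_len := length_of_mem_Bset hb
    refine ⟨b ++ a₂, mem_Bset_add_two.2 (.inr ⟨b, hb, a₂, ha₂, rfl⟩), ?_⟩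
    rw [show 2 * (n + 1) = 2 * n + 2 by ring,
      show Nat.fib (2 * n + 2) + 1 = u.length + (Nat.fib (2 * n) + 1) by omega,
      List.drop_length_add_append, List.drop_append_of_le_length (by omega), hdrop,
      List.drop_append_of_le_length (by omega)]

lemma image_drop_Bset_add_two (n : ℕ) :
    (fun w : Word => w.drop (Nat.fib (2 * n + 2) + 1)) '' Bset (n + 2) =
      (fun w : Word => w.drop 1) '' Bset (n + 1) := by
  ext x
  constructor
  · rintro ⟨w, hw, rfl⟩
    rcases mem_Bset_add_two.1 hw with ⟨u, hu, v, hv, rfl⟩ | ⟨v, hv, u, hu, rfl⟩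
    · refine ⟨v, hv, ?_⟩
      dsimp only
      rw [← length_of_mem_Aset hu, List.drop_length_add_append]
    · obtain ⟨b, hb, hdrop⟩ := exists_mem_Bset_drop_eq_of_mem_Aset hu
      have fib_even : Nat.fib (2 * n + 2) = Nat.fib (2 * n) + Nat.fib (2 * n + 1) :=
        Nat.fib_add_two
      refine ⟨b, hb, ?_⟩
      dsimp only
      rw [show Nat.fib (2 * n + 2) + 1 = v.length + (Nat.fib (2 * n) + 1) by
        rw [length_of_mem_Bset hv]; omega, List.drop_length_add_append, hdrop]
  · rintro ⟨v, hv, rfl⟩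
    obtain ⟨u, hu⟩ := (Aset_Bset_nonempty n).1
    refine ⟨u ++ v, mem_Bset_add_two.2 (.inl ⟨u, hu, v, hv, rfl⟩), ?_⟩
    dsimp only
    rw [← length_of_mem_Aset hu, List.drop_length_add_append]

lemma wordSlice_of_length_le {w : Word} {i j : ℕ} (h : w.length ≤ j) :
    wordSlice w i j = w.drop (i - 1) :=
  List.take_of_length_le (by rw [List.length_drop]; omega)

lemma setSlice_of_length_le {W : Set Word} {i j : ℕ} (h : ∀ w ∈ W, w.length ≤ j) :
    setSlice W i j = (fun w : Word => w.drop (i - 1)) '' W := by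
  ext x
  simp only [setSlice, Set.mem_ofPred_eq, Set.mem_image, eq_comm (a := x)]
  exact exists_congr fun w => and_congr_right fun hw => by rw [wordSlice_of_length_le (h w hw)]

theorem suffix_Bset_eq_succ (n : ℕ) (hn : 2 ≤ n) :
    setSlice (Bset n) 2 (Nat.fib (2 * n - 1)) =
      setSlice (Bset (n + 1)) (Nat.fib (2 * n) + 2) (Nat.fib (2 * n + 1)) := by
  obtain ⟨k, rfl⟩ : ∃ k, n = k + 1 := ⟨n - 1, by omega⟩
  have h_odd : 2 * (k + 1) - 1 = 2 * k + 1 := by omega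
  rw [h_odd, setSlice_of_length_le fun w hw => (length_of_mem_Bset hw).le,
    setSlice_of_length_le fun w hw => (length_of_mem_Bset hw).le,
    ← image_drop_Bset_add_two k]
  rfl
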